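/- Skew Boolean algebras are locally finite: if S is a skew Boolean algebra generated by a finite subset X, then S is finite. -/

import Mathlib

universe u

/-- A skew Boolean algebra. -/
class SBA (S : Type u) where
  wedge : S → S → S
  vee : S → S → S
  diff : S → S → S
  zero : S
  wedge_assoc : ∀ x y z : S, wedge (wedge x y) z = wedge x (wedge y z)
  vee_assoc : ∀ x y z : S, vee (vee x y) z = vee x (vee y z)
  absorb1 : ∀ x y : S, wedge x (vee x y) = x
  absorb2 : ∀ x y : S, wedge (vee y x) x = x
  absorb3 : ∀ x y : S, vee x (wedge x y) = x
  absorb4 : ∀ x y : S, vee (wedge y x) x = x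
  sdistrib1 : ∀ x y z : S, wedge x (vee y z) = vee (wedge x y) (wedge x z)
  sdistrib2 : ∀ x y z : S, wedge (vee x y) z = vee (wedge x z) (wedge y z)
  zero_wedge : ∀ x : S, wedge zero x = zero
  wedge_zero : ∀ x : S, wedge x zero = zero
  zero_vee : ∀ x : S, vee zero x = x
  vee_zero : ∀ x : S, vee x zero = x
  diff_ax1 : ∀ x y : S, vee (wedge (wedge x y) x) (diff x y) = x
  diff_ax2 : ∀ x y : S, wedge (wedge (wedge x y) x) (diff x y) = zero
  diff_ax3 : ∀ x y : S, wedge (diff x y) (wedge (wedge x y) x) = zero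

namespace SBA

scoped infixl:70 " ⋏ " => SBA.wedge
scoped infixl:65 " ⋎ " => SBA.vee
scoped infixl:70 " ∖ " => SBA.diff

variable {S : Type u} [SBA S]

/-- Green's relation `D`: `x D y` iff `x⋏y⋏x = x` and `y⋏x⋏y = y`. -/
def Drel (x y : S) : Prop := x ⋏ y ⋏ x = x ∧ y ⋏ x ⋏ y = y

/-- The natural partial order: `x ≤ y` iff `x⋏y = x = y⋏x`. -/
def nle (x y : S) : Prop := x ⋏ y = x ∧ y ⋏ x = x

/-- An atom: a nonzero element with nothing strictly between it and `0`. -/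
def IsAtom (a : S) : Prop := a ≠ zero ∧ ∀ x : S, nle x a → x = zero ∨ x = a

/-- `X` generates `S`: the only subset of `S` containing `X` and `0` and closed
under the three operations is `S` itself. -/
def Generates (X : Set S) : Prop :=
  ∀ T : Set S, X ⊆ T → zero ∈ T →
    (∀ a b : S, a ∈ T → b ∈ T → a ⋏ b ∈ T ∧ a ⋎ b ∈ T ∧ a ∖ b ∈ T) →
    T = Set.univ

/-- A homomorphism of skew Boolean algebras. -/
def IsHom {T : Type u} [SBA T] (f : S → T) : Prop :=
  (∀ a b : S, f (a ⋏ b) = f a ⋏ f b) ∧ (∀ a b : S, f (a ⋎ b) = f a ⋎ f b) ∧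
    (∀ a b : S, f (a ∖ b) = f a ∖ f b) ∧ f zero = zero

end SBA

open SBA

/-- A left-handed skew Boolean algebra. -/
class LeftHanded (S : Type u) [SBA S] : Prop where
  lh_wedge : ∀ x y : S, x ⋏ y ⋏ x = x ⋏ y
  lh_vee : ∀ x y : S, x ⋎ y ⋎ x = y ⋎ x

/-- `S` is freely generated by `X` over the variety of all skew Boolean algebras. -/
def FreelyGenerates (S : Type u) [SBA S] (X : Set S) : Prop :=
  Generates X ∧
    ∀ (T : Type u) [SBA T], ∀ g : X → T,
      ∃ f : S → T, IsHom f ∧ ∀ x : X, f x = g x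

/-- `S` is freely generated by `X` over the variety of left-handed skew Boolean algebras. -/
def LFreelyGenerates (S : Type u) [SBA S] [LeftHanded S] (X : Set S) : Prop :=
  Generates X ∧
    ∀ (T : Type u) [SBA T] [LeftHanded T], ∀ g : X → T,
      ∃ f : S → T, IsHom f ∧ ∀ x : X, f x = g x

/-!
Let `x₁, …, xₙ` generate `S`. For a sign vector `ν ∈ {0,1}ⁿ`, cutting an element `y` successively
by the generators (keeping `y ⋏ xᵢ ⋏ y` when `νᵢ = 1` and `y ∖ xᵢ` when `νᵢ = 0`) splits `y` into
`2ⁿ` pairwise orthogonal pieces whose join is `y`. The nonzero pieces `p ν j` of the generators in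
one cell `ν` are pairwise `D`-related, so, the `⋏`-reduct being a normal band, they form a
rectangular band: `p ν j ⋏ p ν k ⋏ p ν j' ⋏ p ν k' = p ν j ⋏ p ν k'`. Hence the joins `⋁ ν, t ν`
with each `t ν` either `0` or some `p ν j ⋏ p ν k` are closed under `⋏`, `⋎` and `∖`. They contain
`0` and the generators, so they exhaust `S`, and there are only finitely many of them.
-/

namespace SBA

variable {S : Type u} [SBA S]

/-- Leech's natural preorder `x ≼ y`; `Drel` is its symmetric part. -/
def DLe (x y : S) : Prop := x ⋏ y ⋏ x = x

theorem wedge_self (x : S) : x ⋏ x = x := by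
  have h := absorb1 x (x ⋏ x)
  rwa [absorb3] at h

theorem diff_wedge_self (x y : S) : x ∖ y ⋏ x = x ∖ y := by
  conv_lhs => arg 2; rw [← diff_ax1 x y]
  rw [sdistrib1, diff_ax3, wedge_self, zero_vee]

theorem wedge_diff_self (x y : S) : x ⋏ (x ∖ y) = x ∖ y := by
  conv_lhs => arg 1; rw [← diff_ax1 x y]
  rw [sdistrib2, diff_ax2, wedge_self, zero_vee]

theorem wedge_eq_zero_comm {a b : S} : a ⋏ b = zero ↔ b ⋏ a = zero := by
  suffices ∀ a b : S, a ⋏ b = zero → b ⋏ a = zero from ⟨this a b, this b a⟩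
  intro a b h
  rw [← wedge_self (b ⋏ a), wedge_assoc, ← wedge_assoc a, h, zero_wedge, wedge_zero]

theorem wedge_wedge_eq_zero {a c : S} (h : c ⋏ a = zero) (b : S) : a ⋏ b ⋏ c = zero := by
  rw [← wedge_self (a ⋏ b ⋏ c)]
  simp only [wedge_assoc]
  rw [← wedge_assoc c, h, zero_wedge, wedge_zero, wedge_zero]

theorem diff_wedge_eq_zero (x y : S) : x ∖ y ⋏ y = zero := by
  have h : x ∖ y ⋏ y ⋏ x = zero := by
    have := diff_ax3 x y
    rwa [← wedge_assoc, ← wedge_assoc, diff_wedge_self] at this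
  rw [← wedge_self (x ∖ y ⋏ y)]
  conv_lhs => arg 2; arg 1; rw [← wedge_diff_self]
  simp only [← wedge_assoc]
  rw [h, zero_wedge, zero_wedge]

theorem wedge_diff_eq_zero (x y : S) : y ⋏ (x ∖ y) = zero :=
  wedge_eq_zero_comm.mp (diff_wedge_eq_zero x y)

theorem diff_unique {x y d : S} (h1 : x ⋏ y ⋏ x ⋎ d = x) (h2 : x ⋏ y ⋏ x ⋏ d = zero) :
    x ∖ y = d := by
  have hxd : x ⋏ d = d := by
    conv_lhs => arg 1; rw [← h1]
    rw [sdistrib2, h2, wedge_self, zero_vee]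
  calc x ∖ y = x ∖ y ⋏ (x ⋏ y ⋏ x ⋎ d) := by rw [h1, diff_wedge_self]
    _ = (x ⋏ y ⋏ x ⋎ x ∖ y) ⋏ d := by rw [sdistrib1, sdistrib2, diff_ax3, h2, zero_vee]
    _ = d := by rw [diff_ax1, hxd]

theorem vee_comm_of_wedge_eq_zero {a b : S} (h : a ⋏ b = zero) : a ⋎ b = b ⋎ a := by
  have hba : b ⋏ a = zero := wedge_eq_zero_comm.mp h
  have hm : (a ⋎ b) ⋏ b ⋏ (a ⋎ b) = b := by
    rw [sdistrib2, h, wedge_self, zero_vee, sdistrib1, hba, wedge_self, zero_vee]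
  set d := (a ⋎ b) ∖ b
  have hsplit : b ⋎ d = a ⋎ b := by rw [← diff_ax1 (a ⋎ b) b, hm]
  have hbd : b ⋏ d = zero := by rw [← diff_ax2 (a ⋎ b) b, hm]
  have hd : d = a := by
    calc d = (a ⋎ b) ⋏ d := (wedge_diff_self _ _).symm
      _ = a ⋏ (b ⋎ d) := by rw [sdistrib1, sdistrib2, h, hbd, zero_vee, vee_zero]
      _ = a := by rw [hsplit, absorb1]
  rw [← hsplit, hd]

theorem dle_of_nle {a b : S} (h : nle a b) : DLe a b := by
  rw [DLe, h.1, wedge_self]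

theorem nle_trans {a b c : S} (hab : nle a b) (hbc : nle b c) : nle a c :=
  ⟨by rw [← hab.1, wedge_assoc, hbc.1], by rw [← hab.2, ← wedge_assoc, hbc.2]⟩

theorem dle_of_nle_of_dle {a b c : S} (hab : nle a b) (hbc : DLe b c) : DLe a c := by
  unfold DLe at hbc ⊢
  calc a ⋏ c ⋏ a = a ⋏ b ⋏ c ⋏ (b ⋏ a) := by rw [hab.1, hab.2]
    _ = a ⋏ (b ⋏ c ⋏ b) ⋏ a := by simp only [wedge_assoc]
    _ = a := by rw [hbc, hab.1, wedge_self]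

theorem nle_wedge_wedge (y w : S) : nle (y ⋏ w ⋏ y) y :=
  ⟨by rw [wedge_assoc, wedge_self], by rw [← wedge_assoc, ← wedge_assoc, wedge_self]⟩

theorem nle_diff (y w : S) : nle (y ∖ w) y :=
  ⟨diff_wedge_self y w, wedge_diff_self y w⟩

theorem dle_wedge_wedge (y w : S) : DLe (y ⋏ w ⋏ y) w := by
  unfold DLe
  calc y ⋏ w ⋏ y ⋏ w ⋏ (y ⋏ w ⋏ y) = (y ⋏ w) ⋏ (y ⋏ w) ⋏ ((y ⋏ w) ⋏ y) := by
        simp only [wedge_assoc]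
    _ = y ⋏ w ⋏ y := by rw [wedge_self, ← wedge_assoc, wedge_self]

theorem wedge_eq_zero_of_dle {w x d : S} (h : DLe w x) (hd : x ⋏ d = zero) :
    d ⋏ w = zero := by
  rw [← h, ← wedge_assoc, ← wedge_assoc, wedge_wedge_eq_zero hd, zero_wedge]

theorem wedge_comm_of_nle {u v z : S} (hu : nle u z) (hv : nle v z) : u ⋏ v = v ⋏ u := by
  have hsplit : u ⋎ z ∖ u = z := by
    have := diff_ax1 z u
    rwa [hu.2, hu.1] at this
  have huv : u ⋏ v = u ⋏ v ⋏ u := by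
    conv_lhs => rw [← hv.1, ← hsplit]
    rw [sdistrib1, sdistrib1, ← wedge_assoc, ← wedge_assoc,
      wedge_wedge_eq_zero (diff_wedge_eq_zero z u), vee_zero]
  have hvu : v ⋏ u = u ⋏ v ⋏ u := by
    conv_lhs => rw [← hv.2, ← hsplit]
    rw [sdistrib2, sdistrib2, wedge_wedge_eq_zero (wedge_diff_eq_zero z u), vee_zero]
  rw [huv, hvu]

theorem vee_eq_wedge_of_drel {a b : S} (h : Drel a b) : a ⋎ b = b ⋏ a := by
  have hab : a ⋎ (b ⋏ a) = b ⋏ a := by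
    have h1 : (a ⋎ b) ⋏ (b ⋏ a) = b ⋏ a := by
      have := absorb2 (b ⋏ a) (a ⋎ b)
      rwa [vee_assoc, absorb3] at this
    rwa [sdistrib2, ← wedge_assoc, ← wedge_assoc, h.1, wedge_self] at h1
  have hb : b ⋏ (a ⋎ b) = b ⋏ a := by
    have h2 : b ⋏ a ⋎ b = b ⋏ a := by
      have := absorb3 (b ⋏ a) b
      rwa [h.2] at this
    rw [sdistrib1, wedge_self, h2]
  rw [← wedge_self (a ⋎ b), sdistrib2, absorb1, hb, hab]

theorem vee_eq_of_wedge_comm {p q : S} (h : p ⋏ q = q ⋏ p) :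
    p ⋎ q = p ⋏ q ⋎ (q ∖ p ⋎ p ∖ q) := by
  have hp : p ⋏ q ⋎ p ∖ q = p := by
    have := diff_ax1 p q
    rwa [wedge_assoc, ← h, ← wedge_assoc, wedge_self] at this
  have hq : p ⋏ q ⋎ q ∖ p = q := by
    have := diff_ax1 q p
    rwa [wedge_assoc, h, ← wedge_assoc, wedge_self, ← h] at this
  calc p ⋎ q = p ⋏ q ⋎ (p ∖ q ⋎ q) := by rw [← vee_assoc, hp]
    _ = p ⋏ q ⋎ q ⋎ p ∖ q := by
        rw [vee_comm_of_wedge_eq_zero (diff_wedge_eq_zero p q), vee_assoc]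
    _ = p ⋏ q ⋎ (q ∖ p ⋎ p ∖ q) := by
        rw [absorb4]
        nth_rewrite 1 [← hq]
        rw [vee_assoc]

theorem vee_comm_of_nle {p q z : S} (hp : nle p z) (hq : nle q z) : p ⋎ q = q ⋎ p := by
  have hpq := wedge_comm_of_nle hp hq
  have hdiff : q ∖ p ⋏ (p ∖ q) = zero :=
    wedge_eq_zero_of_dle (dle_of_nle (nle_diff p q)) (wedge_diff_eq_zero q p)
  rw [vee_eq_of_wedge_comm hpq, vee_eq_of_wedge_comm hpq.symm, hpq,
    vee_comm_of_wedge_eq_zero hdiff]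

theorem wedge_wedge_wedge_wedge_self (a b : S) : a ⋏ b ⋏ a ⋏ (b ⋏ a ⋏ b) = a ⋏ b := by
  calc a ⋏ b ⋏ a ⋏ (b ⋏ a ⋏ b) = (a ⋏ b) ⋏ (a ⋏ b) ⋏ (a ⋏ b) := by simp only [wedge_assoc]
    _ = a ⋏ b := by rw [wedge_self, wedge_self]

theorem drel_wedge_wedge (a b : S) : Drel (a ⋏ b ⋏ a) (b ⋏ a ⋏ b) := by
  have key : ∀ a b : S, a ⋏ b ⋏ a ⋏ (b ⋏ a ⋏ b) ⋏ (a ⋏ b ⋏ a) = a ⋏ b ⋏ a := fun a b => by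
    rw [wedge_wedge_wedge_wedge_self, ← wedge_assoc, wedge_self]
  exact ⟨key a b, key b a⟩

theorem sandwich_eq_vee (x a b : S) :
    x ⋏ a ⋏ b ⋏ x = x ⋏ (b ⋏ a ⋏ b) ⋏ x ⋎ x ⋏ (a ⋏ b ⋏ a) ⋏ x := by
  rw [← sdistrib2, ← sdistrib1, vee_eq_wedge_of_drel (drel_wedge_wedge b a),
    wedge_wedge_wedge_wedge_self, wedge_assoc x a b]

/-- The `⋏`-reduct of a skew Boolean algebra is a normal band. -/
theorem sandwich_comm (x a b : S) : x ⋏ a ⋏ b ⋏ x = x ⋏ b ⋏ a ⋏ x := by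
  rw [sandwich_eq_vee x a b, sandwich_eq_vee x b a,
    vee_comm_of_nle (nle_wedge_wedge x _) (nle_wedge_wedge x _)]

theorem wedge_wedge_of_dle {a b c : S} (hab : DLe a b) (hac : DLe a c) (hca : DLe c a) :
    a ⋏ b ⋏ c = a ⋏ c := by
  have habca : a ⋏ b ⋏ c ⋏ a = a := by
    have := sandwich_comm a b (c ⋏ a)
    rwa [← wedge_assoc a c a, hac, hab, wedge_assoc (a ⋏ b), wedge_assoc c, wedge_self,
      ← wedge_assoc] at this
  calc a ⋏ b ⋏ c = a ⋏ b ⋏ (c ⋏ a ⋏ c) := by rw [hca]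
    _ = a ⋏ b ⋏ c ⋏ a ⋏ c := by simp only [wedge_assoc]
    _ = a ⋏ c := by rw [habca]

def bigVee (l : List S) : S := l.foldr (· ⋎ ·) zero

@[simp] theorem bigVee_nil : bigVee ([] : List S) = zero := rfl

@[simp] theorem bigVee_cons (a : S) (l : List S) : bigVee (a :: l) = a ⋎ bigVee l := rfl

theorem bigVee_append (l₁ l₂ : List S) : bigVee (l₁ ++ l₂) = bigVee l₁ ⋎ bigVee l₂ := by
  induction l₁ with
  | nil => rw [List.nil_append, bigVee_nil, zero_vee]
  | cons a t ih => rw [List.cons_append, bigVee_cons, bigVee_cons, ih, vee_assoc]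

theorem bigVee_eq_zero {l : List S} (h : ∀ a ∈ l, a = zero) : bigVee l = zero := by
  induction l with
  | nil => rfl
  | cons a t ih =>
    rw [bigVee_cons, h a List.mem_cons_self, zero_vee]
    exact ih fun b hb => h b (List.mem_cons_of_mem a hb)

theorem wedge_bigVee (a : S) (l : List S) : a ⋏ bigVee l = bigVee (l.map (a ⋏ ·)) := by
  induction l with
  | nil => exact wedge_zero a
  | cons b t ih => rw [bigVee_cons, sdistrib1, ih]; rfl

theorem wedge_bigVee_eq_zero {a : S} {l : List S} (h : ∀ b ∈ l, a ⋏ b = zero) :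
    a ⋏ bigVee l = zero := by
  rw [wedge_bigVee]
  exact bigVee_eq_zero (List.forall_mem_map.mpr h)

theorem bigVee_wedge_eq_zero {a : S} {l : List S} (h : ∀ b ∈ l, b ⋏ a = zero) :
    bigVee l ⋏ a = zero :=
  wedge_eq_zero_comm.mp (wedge_bigVee_eq_zero fun b hb => wedge_eq_zero_comm.mp (h b hb))

theorem bigVee_map_eq_single {α : Type*} {l : List α} (hl : l.Nodup) (F : α → S) {a : α}
    (ha : a ∈ l) (h : ∀ b ∈ l, b ≠ a → F b = zero) : bigVee (l.map F) = F a := by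
  induction l with
  | nil => cases ha
  | cons c t ih =>
    obtain ⟨hct, ht⟩ := List.nodup_cons.mp hl
    rw [List.map_cons, bigVee_cons]
    by_cases hca : c = a
    · subst hca
      rw [bigVee_eq_zero (List.forall_mem_map.mpr fun b hb =>
        h b (List.mem_cons_of_mem c hb) (ne_of_mem_of_not_mem hb hct)), vee_zero]
    · rw [h c List.mem_cons_self hca, zero_vee]
      exact ih ht ((List.mem_cons.mp ha).resolve_left (Ne.symm hca))
        fun b hb => h b (List.mem_cons_of_mem c hb)

section Orthogonal

variable {α : Type*} {l : List α} (F G : α → S)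

theorem bigVee_map_wedge_bigVee_map (hl : l.Nodup)
    (h : ∀ a ∈ l, ∀ b ∈ l, a ≠ b → F a ⋏ G b = zero) :
    bigVee (l.map F) ⋏ bigVee (l.map G) = bigVee (l.map fun a => F a ⋏ G a) := by
  induction l with
  | nil => exact zero_wedge _
  | cons a t ih =>
    obtain ⟨hat, ht⟩ := List.nodup_cons.mp hl
    have hFG : F a ⋏ bigVee (t.map G) = zero :=
      wedge_bigVee_eq_zero <| List.forall_mem_map.mpr fun b hb =>
        h a List.mem_cons_self b (List.mem_cons_of_mem a hb) (ne_of_mem_of_not_mem hb hat).symm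
    have hGF : bigVee (t.map F) ⋏ G a = zero :=
      bigVee_wedge_eq_zero <| List.forall_mem_map.mpr fun b hb =>
        h b (List.mem_cons_of_mem a hb) a List.mem_cons_self (ne_of_mem_of_not_mem hb hat)
    simp only [List.map_cons, bigVee_cons]
    rw [sdistrib2, sdistrib1, sdistrib1, hFG, hGF, vee_zero, zero_vee,
      ih ht fun b hb c hc => h b (List.mem_cons_of_mem a hb) c (List.mem_cons_of_mem a hc)]

theorem bigVee_map_vee_bigVee_map (hl : l.Nodup)
    (h : ∀ a ∈ l, ∀ b ∈ l, a ≠ b → F a ⋏ G b = zero) :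
    bigVee (l.map F) ⋎ bigVee (l.map G) = bigVee (l.map fun a => F a ⋎ G a) := by
  induction l with
  | nil => exact zero_vee _
  | cons a t ih =>
    obtain ⟨hat, ht⟩ := List.nodup_cons.mp hl
    have hFG : bigVee (t.map F) ⋏ G a = zero :=
      bigVee_wedge_eq_zero <| List.forall_mem_map.mpr fun b hb =>
        h b (List.mem_cons_of_mem a hb) a List.mem_cons_self (ne_of_mem_of_not_mem hb hat)
    simp only [List.map_cons, bigVee_cons]
    rw [vee_assoc, ← vee_assoc (bigVee _), vee_comm_of_wedge_eq_zero hFG, vee_assoc, ← vee_assoc,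
      ih ht fun b hb c hc => h b (List.mem_cons_of_mem a hb) c (List.mem_cons_of_mem a hc)]

end Orthogonal

section Cells

variable {n : ℕ} (x : Fin n → S)

def cut : List (Fin n) → (Fin n → Bool) → S → S
  | [], _, y => y
  | i :: t, ν, y => cut t ν (if ν i then y ⋏ x i ⋏ y else y ∖ x i)

def cube : List (Fin n) → List (Fin n → Bool)
  | [] => [fun _ => false]
  | i :: t => (cube t).map (Function.update · i true) ++ (cube t).map (Function.update · i false)

theorem cut_congr {l : List (Fin n)} {ν ν' : Fin n → Bool} (h : ∀ i ∈ l, ν i = ν' i) (y : S) :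
    cut x l ν y = cut x l ν' y := by
  induction l generalizing y with
  | nil => rfl
  | cons i t ih =>
    rw [cut, cut, h i List.mem_cons_self]
    exact ih (fun j hj => h j (List.mem_cons_of_mem i hj)) _

theorem nle_cut (l : List (Fin n)) (ν : Fin n → Bool) (y : S) : nle (cut x l ν y) y := by
  induction l generalizing y with
  | nil => exact ⟨wedge_self y, wedge_self y⟩
  | cons i t ih =>
    rw [cut]
    split
    · exact nle_trans (ih _) (nle_wedge_wedge y (x i))
    · exact nle_trans (ih _) (nle_diff y (x i))

theorem dle_cut_of_true {l : List (Fin n)} {ν : Fin n → Bool} {i : Fin n} (hi : i ∈ l)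
    (hν : ν i = true) (y : S) : DLe (cut x l ν y) (x i) := by
  induction l generalizing y with
  | nil => cases hi
  | cons j t ih =>
    rw [cut]
    rcases List.mem_cons.mp hi with rfl | hi
    · rw [if_pos hν]
      exact dle_of_nle_of_dle (nle_cut x t ν _) (dle_wedge_wedge y (x i))
    · exact ih hi _

theorem cut_wedge_eq_zero_of_false {l : List (Fin n)} {ν : Fin n → Bool} {i : Fin n}
    (hi : i ∈ l) (hν : ν i = false) (y : S) : x i ⋏ cut x l ν y = zero := by
  induction l generalizing y with
  | nil => cases hi
  | cons j t ih =>
    rw [cut]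
    rcases List.mem_cons.mp hi with rfl | hi
    · rw [if_neg (by simp [hν])]
      exact wedge_eq_zero_of_dle (dle_of_nle (nle_cut x t ν _)) (diff_wedge_eq_zero y (x i))
    · exact ih hi _

theorem apply_eq_false_of_mem_cube {l : List (Fin n)} {i : Fin n} (hi : i ∉ l) :
    ∀ ν ∈ cube l, ν i = false := by
  induction l with
  | nil => simp [cube]
  | cons j t ih =>
    have hij : i ≠ j := fun h => hi (h ▸ List.mem_cons_self)
    simp only [cube, List.mem_append, List.mem_map]
    rintro _ (⟨μ, hμ, rfl⟩ | ⟨μ, hμ, rfl⟩) <;>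
      rw [Function.update_of_ne hij] <;>
      exact ih (fun h => hi (List.mem_cons_of_mem j h)) μ hμ

theorem nodup_cube {l : List (Fin n)} (hl : l.Nodup) : (cube l).Nodup := by
  induction l with
  | nil => exact List.nodup_singleton _
  | cons i t ih =>
    obtain ⟨hit, ht⟩ := List.nodup_cons.mp hl
    have hinj (b : Bool) : ∀ μ ∈ cube t, ∀ μ' ∈ cube t,
        Function.update μ i b = Function.update μ' i b → μ = μ' := by
      intro μ hμ μ' hμ' h
      funext k
      by_cases hk : k = i
      · subst hk
        rw [apply_eq_false_of_mem_cube hit μ hμ, apply_eq_false_of_mem_cube hit μ' hμ']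
      · simpa [Function.update_of_ne hk] using congrFun h k
    refine List.Nodup.append ((ih ht).map_on (hinj true)) ((ih ht).map_on (hinj false)) ?_
    simp only [List.disjoint_left, List.mem_map]
    rintro _ ⟨μ, -, rfl⟩ ⟨μ', -, h⟩
    simpa using congrFun h i

theorem mem_cube {l : List (Fin n)} {ν : Fin n → Bool} (h : ∀ i ∉ l, ν i = false) :
    ν ∈ cube l := by
  induction l generalizing ν with
  | nil => simpa [cube, funext_iff] using h
  | cons i t ih =>
    have hν : Function.update ν i false ∈ cube t := by
      refine ih fun j hj => ?_
      by_cases hji : j = i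
      · subst hji; simp
      · rw [Function.update_of_ne hji]
        exact h j (by simp [hji, hj])
    simp only [cube, List.mem_append, List.mem_map]
    cases hνi : ν i
    · exact Or.inr ⟨_, hν, by simp [← hνi]⟩
    · exact Or.inl ⟨_, hν, by simp [← hνi]⟩

theorem bigVee_map_cut {l : List (Fin n)} (hl : l.Nodup) (y : S) :
    bigVee ((cube l).map fun ν => cut x l ν y) = y := by
  induction l generalizing y with
  | nil => simp [cube, cut, vee_zero]
  | cons i t ih =>
    obtain ⟨hit, ht⟩ := List.nodup_cons.mp hl
    have hcut (b : Bool) (μ : Fin n → Bool) : cut x (i :: t) (Function.update μ i b) y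
        = cut x t μ (if b then y ⋏ x i ⋏ y else y ∖ x i) := by
      rw [cut, Function.update_self]
      exact cut_congr x (fun j hj => Function.update_of_ne (ne_of_mem_of_not_mem hj hit) _ _) _
    simp only [cube, List.map_append, List.map_map, Function.comp_def, hcut, bigVee_append, ih ht]
    exact diff_ax1 y (x i)

end Cells

section Pieces

variable {n : ℕ} (x : Fin n → S)

def piece (ν : Fin n → Bool) (j : Fin n) : S := cut x (List.finRange n) ν (x j)

theorem nodup_cube_finRange : (cube (List.finRange n)).Nodup :=
  nodup_cube (List.nodup_finRange n)

theorem mem_cube_finRange (ν : Fin n → Bool) : ν ∈ cube (List.finRange n) :=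
  mem_cube fun i hi => absurd (List.mem_finRange i) hi

theorem bigVee_map_piece (j : Fin n) :
    bigVee ((cube (List.finRange n)).map fun ν => piece x ν j) = x j :=
  bigVee_map_cut x (List.nodup_finRange n) (x j)

theorem dle_piece_of_true {ν : Fin n → Bool} {i : Fin n} (hi : ν i = true) (j : Fin n) :
    DLe (piece x ν j) (x i) :=
  dle_cut_of_true x (List.mem_finRange i) hi (x j)

theorem wedge_piece_of_false {ν : Fin n → Bool} {i : Fin n} (hi : ν i = false) (j : Fin n) :
    x i ⋏ piece x ν j = zero :=
  cut_wedge_eq_zero_of_false x (List.mem_finRange i) hi (x j)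

theorem piece_eq_zero {ν : Fin n → Bool} {j : Fin n} (hj : ν j = false) : piece x ν j = zero := by
  have h : DLe (piece x ν j) (x j) := dle_of_nle (nle_cut x _ ν (x j))
  rw [← h, wedge_eq_zero_comm.mp (wedge_piece_of_false x hj j), zero_wedge]

theorem piece_wedge_piece_of_ne {ν μ : Fin n → Bool} (hne : ν ≠ μ) (j k : Fin n) :
    piece x ν j ⋏ piece x μ k = zero := by
  obtain ⟨i, hi⟩ := Function.ne_iff.mp hne
  cases hν : ν i
  · have hμ : μ i = true := by simpa [hν] using hi.symm
    exact wedge_eq_zero_of_dle (dle_piece_of_true x hμ k) (wedge_piece_of_false x hν j)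
  · have hμ : μ i = false := by simpa [hν] using hi.symm
    exact wedge_eq_zero_comm.mp <|
      wedge_eq_zero_of_dle (dle_piece_of_true x hν j) (wedge_piece_of_false x hμ k)

theorem piece_dle_piece {ν : Fin n → Bool} {j k : Fin n} (hk : ν k = true) :
    DLe (piece x ν j) (piece x ν k) := by
  have hx : piece x ν j ⋏ x k = piece x ν j ⋏ piece x ν k := by
    rw [← bigVee_map_piece x k, wedge_bigVee, List.map_map]
    refine bigVee_map_eq_single nodup_cube_finRange _ (mem_cube_finRange ν) fun μ _ hμ => ?_
    exact piece_wedge_piece_of_ne x (Ne.symm hμ) j k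
  have h := dle_cut_of_true x (List.mem_finRange k) hk (x j)
  rwa [DLe, ← piece, hx] at h

theorem piece_wedge_piece_wedge {ν : Fin n → Bool} {j k j' k' : Fin n} (hj : ν j = true)
    (hk : ν k = true) (hj' : ν j' = true) (hk' : ν k' = true) :
    piece x ν j ⋏ piece x ν k ⋏ (piece x ν j' ⋏ piece x ν k') = piece x ν j ⋏ piece x ν k' := by
  rw [← wedge_assoc, wedge_wedge_of_dle (piece_dle_piece x hk) (piece_dle_piece x hj')
      (piece_dle_piece x hj), wedge_wedge_of_dle (piece_dle_piece x hj')
      (piece_dle_piece x hk') (piece_dle_piece x hj)]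

end Pieces

/-- Normal forms over generators `x : Fin n → S`: in the cell `ν`, `none` stands for `zero` and
`some (j, k)` for `piece x ν j ⋏ piece x ν k` (see `Code.eval`). -/
abbrev Code (n : ℕ) := (Fin n → Bool) → Option (Fin n × Fin n)

namespace Code

variable {n : ℕ}

def empty : Code n := fun _ => none

def generator (j : Fin n) : Code n := fun ν => if ν j then some (j, j) else none

def meet (f g : Code n) : Code n := fun ν =>
  match f ν, g ν with
  | some p, some q => some (p.1, q.2)
  | _, _ => none

-- `a ⋎ b = b ⋏ a` for `D`-related `a` and `b`.
def join (f g : Code n) : Code n := fun ν =>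
  match f ν, g ν with
  | some p, some q => some (q.1, p.2)
  | some p, none => some p
  | none, q => q

def sdiff (f g : Code n) : Code n := fun ν =>
  match g ν with
  | none => f ν
  | some _ => none

def Valid (f : Code n) : Prop := ∀ ν p, f ν = some p → ν p.1 = true ∧ ν p.2 = true

theorem valid_empty : (empty : Code n).Valid := by
  simp [Valid, empty]

theorem valid_generator (j : Fin n) : (generator j).Valid := by
  intro ν p h
  by_cases hj : ν j = true
  · simp only [generator, hj, if_true, Option.some.injEq] at h
    subst h
    exact ⟨hj, hj⟩
  · simp [generator, hj] at h

theorem Valid.meet {f g : Code n} (hf : f.Valid) (hg : g.Valid) : (f.meet g).Valid := by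
  intro ν p h
  cases hfν : f ν <;> cases hgν : g ν <;> simp only [Code.meet, hfν, hgν, reduceCtorEq,
    Option.some.injEq] at h
  subst h
  exact ⟨(hf ν _ hfν).1, (hg ν _ hgν).2⟩

theorem Valid.join {f g : Code n} (hf : f.Valid) (hg : g.Valid) : (f.join g).Valid := by
  intro ν p h
  cases hfν : f ν <;> cases hgν : g ν <;> simp only [Code.join, hfν, hgν, reduceCtorEq,
    Option.some.injEq] at h
  all_goals subst h
  · exact hg ν _ hgν
  · exact hf ν _ hfν
  · exact ⟨(hg ν _ hgν).1, (hf ν _ hfν).2⟩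

theorem Valid.sdiff {f g : Code n} (hf : f.Valid) : (f.sdiff g).Valid := by
  intro ν p h
  cases hgν : g ν <;> simp only [Code.sdiff, hgν, reduceCtorEq] at h
  exact hf ν p h

variable (x : Fin n → S)

def cellValue (f : Code n) (ν : Fin n → Bool) : S :=
  (f ν).elim zero fun p => piece x ν p.1 ⋏ piece x ν p.2

def eval (f : Code n) : S := bigVee ((cube (List.finRange n)).map (f.cellValue x))

theorem cellValue_wedge_cellValue_of_ne (f g : Code n) {ν μ : Fin n → Bool} (hne : ν ≠ μ) :
    f.cellValue x ν ⋏ g.cellValue x μ = zero := by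
  cases hf : f ν with
  | none => simp only [cellValue, hf, Option.elim_none, zero_wedge]
  | some p =>
    cases hg : g μ with
    | none => simp only [cellValue, hg, Option.elim_none, wedge_zero]
    | some q =>
      simp only [cellValue, hf, hg, Option.elim_some]
      rw [wedge_assoc, ← wedge_assoc (piece x ν p.2), piece_wedge_piece_of_ne x hne, zero_wedge,
        wedge_zero]

theorem cellValue_meet {f g : Code n} (hf : f.Valid) (hg : g.Valid) (ν : Fin n → Bool) :
    (f.meet g).cellValue x ν = f.cellValue x ν ⋏ g.cellValue x ν := by
  cases hfν : f ν <;> cases hgν : g ν <;>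
    simp only [cellValue, Code.meet, hfν, hgν, Option.elim_none, Option.elim_some, zero_wedge,
      wedge_zero]
  obtain ⟨hp₁, hp₂⟩ := hf ν _ hfν
  obtain ⟨hq₁, hq₂⟩ := hg ν _ hgν
  exact (piece_wedge_piece_wedge x hp₁ hp₂ hq₁ hq₂).symm

theorem cellValue_join {f g : Code n} (hf : f.Valid) (hg : g.Valid) (ν : Fin n → Bool) :
    (f.join g).cellValue x ν = f.cellValue x ν ⋎ g.cellValue x ν := by
  cases hfν : f ν <;> cases hgν : g ν <;>
    simp only [cellValue, Code.join, hfν, hgν, Option.elim_none, Option.elim_some, zero_vee,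
      vee_zero]
  obtain ⟨hp₁, hp₂⟩ := hf ν _ hfν
  obtain ⟨hq₁, hq₂⟩ := hg ν _ hgν
  have hD : Drel (piece x ν _ ⋏ piece x ν _) (piece x ν _ ⋏ piece x ν _) :=
    ⟨by rw [piece_wedge_piece_wedge x hp₁ hp₂ hq₁ hq₂, piece_wedge_piece_wedge x hp₁ hq₂ hp₁ hp₂],
     by rw [piece_wedge_piece_wedge x hq₁ hq₂ hp₁ hp₂, piece_wedge_piece_wedge x hq₁ hp₂ hq₁ hq₂]⟩
  rw [vee_eq_wedge_of_drel hD, piece_wedge_piece_wedge x hq₁ hq₂ hp₁ hp₂]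

theorem eval_empty : (empty : Code n).eval x = zero :=
  bigVee_eq_zero (by simp [cellValue, empty])

theorem eval_meet {f g : Code n} (hf : f.Valid) (hg : g.Valid) :
    (f.meet g).eval x = f.eval x ⋏ g.eval x := by
  rw [eval, eval, eval, bigVee_map_wedge_bigVee_map _ _ nodup_cube_finRange
    fun _ _ _ _ hne => cellValue_wedge_cellValue_of_ne x f g hne]
  exact congrArg (fun F => bigVee (List.map F _)) (funext (cellValue_meet x hf hg))

theorem eval_join {f g : Code n} (hf : f.Valid) (hg : g.Valid) :
    (f.join g).eval x = f.eval x ⋎ g.eval x := by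
  rw [eval, eval, eval, bigVee_map_vee_bigVee_map _ _ nodup_cube_finRange
    fun _ _ _ _ hne => cellValue_wedge_cellValue_of_ne x f g hne]
  exact congrArg (fun F => bigVee (List.map F _)) (funext (cellValue_join x hf hg))

theorem eval_sdiff {f g : Code n} (hf : f.Valid) (hg : g.Valid) :
    (f.sdiff g).eval x = f.eval x ∖ g.eval x := by
  have hfgf : (f.meet g).meet f |>.Valid := (hf.meet hg).meet hf
  symm
  apply diff_unique
  · rw [← eval_meet x hf hg, ← eval_meet x (hf.meet hg) hf, ← eval_join x hfgf hf.sdiff]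
    congr 1
    funext ν
    cases hfν : f ν <;> cases hgν : g ν <;> simp [Code.meet, Code.join, Code.sdiff, hfν, hgν]
  · rw [← eval_meet x hf hg, ← eval_meet x (hf.meet hg) hf, ← eval_meet x hfgf hf.sdiff,
      ← eval_empty x]
    congr 1
    funext ν
    cases hfν : f ν <;> cases hgν : g ν <;> simp [Code.meet, Code.sdiff, empty, hfν, hgν]

theorem eval_generator (j : Fin n) : (generator j).eval x = x j := by
  have h : (generator j).cellValue x = fun ν => piece x ν j := by
    funext ν
    cases hj : ν j
    · simp [cellValue, generator, hj, piece_eq_zero x hj]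
    · simp [cellValue, generator, hj, wedge_self]
  rw [eval, h, bigVee_map_piece]

end Code

theorem finite_of_generates_range {n : ℕ} (x : Fin n → S) (h : Generates (Set.range x)) :
    Finite S := by
  let T : Set S := (fun f : Code n => f.eval x) '' {f | f.Valid}
  have hT : T = Set.univ := by
    refine h T ?_ ⟨Code.empty, Code.valid_empty, Code.eval_empty x⟩ ?_
    · rintro _ ⟨j, rfl⟩
      exact ⟨_, Code.valid_generator j, Code.eval_generator x j⟩
    · rintro _ _ ⟨f, hf, rfl⟩ ⟨g, hg, rfl⟩
      exact ⟨⟨_, hf.meet hg, Code.eval_meet x hf hg⟩, ⟨_, hf.join hg, Code.eval_join x hf hg⟩,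
        ⟨_, hf.sdiff, Code.eval_sdiff x hf hg⟩⟩
  exact Set.finite_univ_iff.mp (hT ▸ (Set.toFinite _).image _)

end SBA

theorem stmt1 (S : Type u) [SBA S] (X : Set S) (hX : X.Finite)
    (hgen : Generates X) : Finite S := by
  obtain ⟨n, x, -, rfl⟩ := hX.fin_param
  exact finite_of_generates_range x hgen
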